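/- arXiv:1712.08380 — 4 statements merged into one kernel-verified Lean document; each statement's English description precedes it below -/
import Mathlib

section
/- Let r > 0, a ∈ ℝ², and α ∈ ℝ \ ℤ. Then for every smooth function u : ℝ² → ℂ whose support is compact and contained in D_r(a) \ {a}, one has ∫_{D_r(a)} |u(x)|² dx ≤ (r² / (min_{j∈ℤ} |j − α|)²) · ∫_{D_r(a)} ‖i∇u(x) + A_a^α(x)·u(x)‖² dx, where i∇u + A_a^α u denotes the ℂ²-valued function whose k-th component is i·∂_k u + (A_a^α)_k·u. -/
/-!
Only the derivative along the imaginary axis is needed. On a vertical line, the derivative of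
`|u|²` is `2⟪u, ∂ᵧu⟫ = 2⟪iu, (i∂ᵧ + A₂)u⟫`, so `|(|u|²)'| ≤ 2|u| |(i∂ᵧ + A₂)u|` (diamagnetic
inequality). Since `|u|²` vanishes at both ends of the chord of length `2r` that the disk cuts
out of the line, `2|u(t)|²` is bounded by the integral of `2|u| |(i∂ᵧ + A₂)u|` along the chord;
integrating once more and using `2ab ≤ a²/L + L b²` gives
`∫ |u|² ≤ (2r)² ∫ |(i∂ᵧ + A₂)u|²` on each line. Fubini integrates this over all lines, and
`dist(α, ℤ) ≤ 1/2` gives `(2r)² ≤ r² / dist(α, ℤ)²`.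
-/

open MeasureTheory Complex
open Set Metric Function

-- Pointwise diamagnetic inequality: `⟪Iz, Az⟫ = 0`, so `⟪z, w⟫ = ⟪Iz, Iw + Az⟫`.
theorem abs_inner_le_norm_mul_norm_I_mul_add_ofReal_mul (z w : ℂ) (A : ℝ) :
    |inner ℝ z w| ≤ ‖z‖ * ‖I * w + A * z‖ := by
  have h : inner ℝ z w = inner ℝ (I * z) (I * w + A * z) := by
    simp only [Complex.inner, map_mul, conj_I, mul_re, add_re, mul_im, add_im, neg_re, neg_im,
      I_re, I_im, ofReal_re, ofReal_im, conj_re, conj_im]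
    ring
  simpa [h] using abs_real_inner_le_norm (I * z) (I * w + A * z)

section OneDimensional

variable {w w' φ : ℝ → ℝ} {c d : ℝ}

theorem two_mul_le_intervalIntegral_of_abs_deriv_le {t : ℝ}
    (hw : ∀ s, HasDerivAt w (w' s) s) (hw' : Continuous w') (hφ : Continuous φ)
    (hc : w c = 0) (hd : w d = 0) (hw'φ : ∀ s, |w' s| ≤ φ s) (ht : t ∈ Icc c d) :
    2 * w t ≤ ∫ s in c..d, φ s := by
  have hftc : ∀ p q, ∫ s in p..q, w' s = w q - w p := fun p q =>
    intervalIntegral.integral_eq_sub_of_hasDerivAt (fun s _ => hw s) (hw'.intervalIntegrable p q)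
  have hleft : w t ≤ ∫ s in c..t, φ s :=
    calc w t = ∫ s in c..t, w' s := by rw [hftc, hc, sub_zero]
      _ ≤ ∫ s in c..t, φ s := intervalIntegral.integral_mono_on ht.1
          (hw'.intervalIntegrable _ _) (hφ.intervalIntegrable _ _)
          fun s _ => (le_abs_self _).trans (hw'φ s)
  have hright : w t ≤ ∫ s in t..d, φ s :=
    calc w t = ∫ s in t..d, -w' s := by rw [intervalIntegral.integral_neg, hftc, hd]; ring
      _ ≤ ∫ s in t..d, φ s := intervalIntegral.integral_mono_on ht.2
          (hw'.neg.intervalIntegrable _ _) (hφ.intervalIntegrable _ _)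
          fun s _ => (neg_le_abs _).trans (hw'φ s)
  have hsplit := intervalIntegral.integral_add_adjacent_intervals
    (hφ.intervalIntegrable (μ := volume) c t) (hφ.intervalIntegrable t d)
  linarith

theorem intervalIntegral_le_of_abs_deriv_le (hcd : c ≤ d)
    (hw : ∀ s, HasDerivAt w (w' s) s) (hw' : Continuous w') (hφ : Continuous φ)
    (hc : w c = 0) (hd : w d = 0) (hw'φ : ∀ s, |w' s| ≤ φ s) :
    ∫ t in c..d, w t ≤ (d - c) / 2 * ∫ t in c..d, φ t := by
  have hwc : Continuous w := continuous_iff_continuousAt.2 fun s => (hw s).continuousAt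
  calc ∫ t in c..d, w t ≤ ∫ _ in c..d, (∫ s in c..d, φ s) / 2 :=
        intervalIntegral.integral_mono_on hcd (hwc.intervalIntegrable _ _)
          (continuous_const.intervalIntegrable _ _) fun t ht => by
            linarith [two_mul_le_intervalIntegral_of_abs_deriv_le hw hw' hφ hc hd hw'φ ht]
    _ = (d - c) / 2 * ∫ t in c..d, φ t := by
        rw [intervalIntegral.integral_const, smul_eq_mul]; ring

theorem intervalIntegral_norm_sq_le_of_magnetic {f f' : ℝ → ℂ} {A : ℝ → ℝ} (hcd : c ≤ d)
    (hf : ∀ t, HasDerivAt f (f' t) t) (hf' : Continuous f')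
    (hΦ : Continuous fun t => I * f' t + A t * f t) (hc : f c = 0) (hd : f d = 0) :
    ∫ t in c..d, ‖f t‖ ^ 2 ≤ (d - c) ^ 2 * ∫ t in c..d, ‖I * f' t + A t * f t‖ ^ 2 := by
  set Φ := fun t => I * f' t + A t * f t
  have hfc : Continuous f := continuous_iff_continuousAt.2 fun t => (hf t).continuousAt
  have hφ : Continuous fun t => 2 * ‖f t‖ * ‖Φ t‖ := by fun_prop
  have hsup := intervalIntegral_le_of_abs_deriv_le hcd (fun t => (hf t).norm_sq) (by fun_prop)
    hφ (by simp [hc]) (by simp [hd]) fun t => by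
      rw [abs_mul, abs_two, mul_assoc]
      exact mul_le_mul_of_nonneg_left
        (abs_inner_le_norm_mul_norm_I_mul_add_ofReal_mul _ _ _) zero_le_two
  have hamgm : (d - c) * ∫ t in c..d, 2 * ‖f t‖ * ‖Φ t‖ ≤
      (∫ t in c..d, ‖f t‖ ^ 2) + (d - c) ^ 2 * ∫ t in c..d, ‖Φ t‖ ^ 2 := by
    rw [← intervalIntegral.integral_const_mul, ← intervalIntegral.integral_const_mul,
      ← intervalIntegral.integral_add (Continuous.intervalIntegrable (by fun_prop) _ _)
        (Continuous.intervalIntegrable (by fun_prop) _ _)]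
    exact intervalIntegral.integral_mono_on hcd (Continuous.intervalIntegrable (by fun_prop) _ _)
      (Continuous.intervalIntegrable (by fun_prop) _ _) fun t _ => by
        nlinarith [sq_nonneg (‖f t‖ - (d - c) * ‖Φ t‖)]
  linarith

end OneDimensional

noncomputable def magneticDeriv (A : ℂ → ℝ) (u : ℂ → ℂ) (v z : ℂ) : ℂ :=
  I * fderiv ℝ u z v + A z * u z

theorem support_magneticDeriv_subset (A : ℂ → ℝ) (u : ℂ → ℂ) (v : ℂ) :
    support (magneticDeriv A u v) ⊆ tsupport u := fun z hz => by
  by_contra h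
  simp [magneticDeriv, fderiv_of_notMem_tsupport ℝ h, image_eq_zero_of_notMem_tsupport h] at hz

theorem continuous_magneticDeriv {A : ℂ → ℝ} {u : ℂ → ℂ} {s : Set ℂ} (hu : ContDiff ℝ 1 u)
    (hA : ContinuousOn A s) (hs : IsOpen s) (hus : tsupport u ⊆ s) (v : ℂ) :
    Continuous (magneticDeriv A u v) :=
  (continuous_const.mul ((hu.continuous_fderiv one_ne_zero).clm_apply continuous_const)).add <|
    ((continuous_ofReal.comp_continuousOn hA).mul hu.continuous.continuousOn)
      |>.continuous_of_tsupport_subset hs (tsupport_mul_subset_right.trans hus)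

section VerticalLines

variable {E : Type*} [NormedAddCommGroup E] {h : ℂ → E}

theorem integrable_uncurry_add_mul_I (hh : Integrable h) :
    Integrable (fun p : ℝ × ℝ => h (p.1 + p.2 * I)) (volume.prod volume) := by
  have := (volume_preserving_equiv_real_prod.symm.integrable_comp_emb
    measurableEquivRealProd.symm.measurableEmbedding).2 hh
  simpa [Function.comp_def, measurableEquivRealProd_symm_apply, mk_eq_add_mul_I,
    Measure.volume_eq_prod] using this

theorem integral_eq_integral_integral_add_mul_I [NormedSpace ℝ E] [CompleteSpace E]
    (hh : Integrable h) : ∫ z, h z = ∫ x : ℝ, ∫ y : ℝ, h (x + y * I) := by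
  rw [← integral_prod _ (integrable_uncurry_add_mul_I hh),
    ← volume_preserving_equiv_real_prod.symm.integral_comp
      measurableEquivRealProd.symm.measurableEmbedding]
  simp [measurableEquivRealProd_symm_apply, mk_eq_add_mul_I, Measure.volume_eq_prod]

theorem integral_add_mul_I_eq_intervalIntegral [NormedSpace ℝ E] {c d : ℝ} (hcd : c ≤ d)
    (hh : support h ⊆ {z | z.im ∈ Ioo c d}) (x : ℝ) :
    ∫ y : ℝ, h (x + y * I) = ∫ y in c..d, h (x + y * I) := by
  rw [intervalIntegral.integral_of_le hcd, setIntegral_eq_integral_of_forall_compl_eq_zero]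
  intro y hy
  by_contra hne
  exact hy (Ioo_subset_Ioc_self (by simpa using hh hne))

end VerticalLines

theorem ball_subset_im_mem_Ioo (a : ℂ) (r : ℝ) :
    ball a r ⊆ {z | z.im ∈ Ioo (a.im - r) (a.im + r)} := fun z hz => by
  have := (abs_im_le_norm (z - a)).trans_lt (mem_ball_iff_norm.1 hz)
  rw [sub_im, abs_lt] at this
  exact ⟨by linarith, by linarith⟩

section HorizontalStrip

variable {u : ℂ → ℂ} {A : ℂ → ℝ} {c d : ℝ}

theorem integral_norm_sq_on_vertical_line_le (hcd : c ≤ d) (hu : ContDiff ℝ 1 u)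
    (hΦ : Continuous (magneticDeriv A u I)) (hsupp : tsupport u ⊆ {z | z.im ∈ Ioo c d})
    (x : ℝ) :
    ∫ y : ℝ, ‖u (x + y * I)‖ ^ 2 ≤
      (d - c) ^ 2 * ∫ y : ℝ, ‖magneticDeriv A u I (x + y * I)‖ ^ 2 := by
  have hline : ∀ y : ℝ, HasDerivAt (fun y : ℝ => (x : ℂ) + y * I) I y := fun y => by
    simpa using ((hasDerivAt_id y).ofReal_comp.mul_const I).const_add (x : ℂ)
  have hvanish : ∀ y ∉ Ioo c d, u (x + y * I) = 0 := fun y hy =>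
    image_eq_zero_of_notMem_tsupport fun h => hy (by simpa using hsupp h)
  rw [integral_add_mul_I_eq_intervalIntegral (h := fun z => ‖u z‖ ^ 2) hcd
      (fun z hz => hsupp (subset_tsupport u (by simpa using hz))),
    integral_add_mul_I_eq_intervalIntegral (h := fun z => ‖magneticDeriv A u I z‖ ^ 2) hcd
      (fun z hz => hsupp (support_magneticDeriv_subset A u I (by simpa using hz)))]
  exact intervalIntegral_norm_sq_le_of_magnetic hcd
    (fun y => ((hu.differentiable one_ne_zero _).hasFDerivAt).comp_hasDerivAt y (hline y))
    (((hu.continuous_fderiv one_ne_zero).clm_apply continuous_const).comp (by fun_prop))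
    (hΦ.comp (by fun_prop)) (hvanish c (by simp)) (hvanish d (by simp))

theorem integral_norm_sq_le_mul_integral_norm_sq_magneticDeriv_I (hcd : c ≤ d)
    (hu : ContDiff ℝ 1 u) (hcs : HasCompactSupport u) (hΦ : Continuous (magneticDeriv A u I))
    (hsupp : tsupport u ⊆ {z | z.im ∈ Ioo c d}) :
    ∫ z, ‖u z‖ ^ 2 ≤ (d - c) ^ 2 * ∫ z, ‖magneticDeriv A u I z‖ ^ 2 := by
  have hu2 : Integrable fun z => ‖u z‖ ^ 2 :=
    (hu.continuous.norm.pow 2).integrable_of_hasCompactSupport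
      (hcs.mono fun z hz => by simpa using hz)
  have hΦ2 : Integrable fun z => ‖magneticDeriv A u I z‖ ^ 2 :=
    (hΦ.norm.pow 2).integrable_of_hasCompactSupport
      (hcs.mono' fun z hz => support_magneticDeriv_subset A u I (by simpa using hz))
  rw [integral_eq_integral_integral_add_mul_I hu2, integral_eq_integral_integral_add_mul_I hΦ2,
    ← integral_const_mul]
  exact integral_mono (integrable_uncurry_add_mul_I hu2).integral_prod_left
    ((integrable_uncurry_add_mul_I hΦ2).integral_prod_left.const_mul _)
    (integral_norm_sq_on_vertical_line_le hcd hu hΦ hsupp)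

theorem setIntegral_ball_norm_sq_le_of_tsupport_subset {a : ℂ} {r : ℝ} (hr : 0 ≤ r)
    (hu : ContDiff ℝ 1 u) (hΦ : Continuous (magneticDeriv A u I))
    (hsupp : tsupport u ⊆ ball a r) :
    ∫ z in ball a r, ‖u z‖ ^ 2 ≤ (2 * r) ^ 2 * ∫ z in ball a r, ‖magneticDeriv A u I z‖ ^ 2 := by
  have hcs : HasCompactSupport u :=
    isCompact_of_isClosed_isBounded (isClosed_tsupport u) (isBounded_ball.subset hsupp)
  have hset : ∀ f : ℂ → ℝ, support f ⊆ tsupport u → ∫ z in ball a r, f z = ∫ z, f z :=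
    fun f hf => setIntegral_eq_integral_of_forall_compl_eq_zero fun z hz =>
      notMem_support.1 fun h => hz (hsupp (hf h))
  rw [hset _ fun z hz => subset_tsupport u (by simpa using hz),
    hset _ fun z hz => support_magneticDeriv_subset A u I (by simpa using hz)]
  convert integral_norm_sq_le_mul_integral_norm_sq_magneticDeriv_I (by linarith) hu hcs hΦ
    (hsupp.trans (ball_subset_im_mem_Ioo a r)) using 2
  ring

end HorizontalStrip

theorem iInf_abs_intCast_sub_eq (α : ℝ) : ⨅ j : ℤ, |(j : ℝ) - α| = |round α - α| :=
  le_antisymm (ciInf_le ⟨0, by rintro _ ⟨j, rfl⟩; positivity⟩ _)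
    (le_ciInf fun j => by simpa [abs_sub_comm] using round_le α j)

theorem sq_two_mul_le_div_sq_iInf_abs_intCast_sub (r : ℝ) {α : ℝ} (hα : ∀ j : ℤ, α ≠ j) :
    (2 * r) ^ 2 ≤ r ^ 2 / (⨅ j : ℤ, |(j : ℝ) - α|) ^ 2 := by
  rw [iInf_abs_intCast_sub_eq]
  have hpos : 0 < |(round α : ℝ) - α| := abs_pos.2 (sub_ne_zero.2 fun h => hα _ h.symm)
  have hhalf : |(round α : ℝ) - α| ≤ 1 / 2 := by simpa [abs_sub_comm] using abs_sub_round α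
  rw [le_div_iff₀ (by positivity)]
  nlinarith [sq_nonneg r, mul_le_mul hhalf hhalf hpos.le (by norm_num)]

theorem poincare_type_inequality_general
    (r : ℝ) (hr : 0 < r) (a : ℂ) (α : ℝ) (hα : ∀ j : ℤ, α ≠ (j : ℝ)) (u : ℂ → ℂ)
    (hu : ContDiff ℝ (⊤ : ℕ∞) u)
    (hsupp : tsupport u ⊆ Metric.ball a r \ {a}) :
    ∫ x in Metric.ball a r, ‖u x‖ ^ 2 ≤
      (r ^ 2 / (⨅ j : ℤ, |(j : ℝ) - α|) ^ 2) *
        ∫ x in Metric.ball a r,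
          (‖Complex.I * fderiv ℝ u x 1 +
              ((α * (-(x - a).im / ‖x - a‖ ^ 2) : ℝ) : ℂ) * u x‖ ^ 2 +
           ‖Complex.I * fderiv ℝ u x Complex.I +
              ((α * ((x - a).re / ‖x - a‖ ^ 2) : ℝ) : ℂ) * u x‖ ^ 2) := by
  set A₁ : ℂ → ℝ := fun x => α * (-(x - a).im / ‖x - a‖ ^ 2)
  set A₂ : ℂ → ℝ := fun x => α * ((x - a).re / ‖x - a‖ ^ 2)
  set Φ₁ := magneticDeriv A₁ u 1
  set Φ₂ := magneticDeriv A₂ u I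
  change _ ≤ _ * ∫ x in ball a r, (‖Φ₁ x‖ ^ 2 + ‖Φ₂ x‖ ^ 2)
  have hu1 : ContDiff ℝ 1 u := hu.of_le (by exact_mod_cast le_top)
  have hpole : tsupport u ⊆ {a}ᶜ := fun z hz => (hsupp hz).2
  have hne : ∀ x ∈ ({a}ᶜ : Set ℂ), ‖x - a‖ ^ 2 ≠ 0 := fun x hx => by simpa [sub_eq_zero] using hx
  have hΦ₁ : Continuous Φ₁ := continuous_magneticDeriv hu1
    (by fun_prop (disch := exact hne)) isOpen_compl_singleton hpole 1
  have hΦ₂ : Continuous Φ₂ := continuous_magneticDeriv hu1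
    (by fun_prop (disch := exact hne)) isOpen_compl_singleton hpole I
  have hint : ∀ Φ : ℂ → ℂ, Continuous Φ → IntegrableOn (fun x => ‖Φ x‖ ^ 2) (ball a r) :=
    fun Φ hΦ => ((hΦ.norm.pow 2).continuousOn.integrableOn_compact
      (isCompact_closedBall a r)).mono_set ball_subset_closedBall
  calc ∫ x in ball a r, ‖u x‖ ^ 2
      ≤ (2 * r) ^ 2 * ∫ x in ball a r, ‖Φ₂ x‖ ^ 2 :=
        setIntegral_ball_norm_sq_le_of_tsupport_subset hr.le hu1 hΦ₂ (hsupp.trans sdiff_subset)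
    _ ≤ (2 * r) ^ 2 * ∫ x in ball a r, (‖Φ₁ x‖ ^ 2 + ‖Φ₂ x‖ ^ 2) :=
        mul_le_mul_of_nonneg_left (setIntegral_mono (hint _ hΦ₂) ((hint _ hΦ₁).add (hint _ hΦ₂))
          fun x => le_add_of_nonneg_left (by positivity)) (by positivity)
    _ ≤ _ := mul_le_mul_of_nonneg_right (sq_two_mul_le_div_sq_iInf_abs_intCast_sub r hα)
        (setIntegral_nonneg measurableSet_ball fun _ _ => by positivity)

/-- Poincaré-type inequality for Aharonov–Bohm operators with non-integer circulation:
for `r > 0`, `a ∈ ℝ² ≅ ℂ`, `α ∈ ℝ \ ℤ`, and every smooth compactly supported `u`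
with support contained in `D_r(a) \ {a}`,
`∫_{D_r(a)} |u|² ≤ (r² / (min_{j∈ℤ} |j − α|)²) ∫_{D_r(a)} ‖(i∇ + A_a^α)u‖²`. -/
theorem poincare_type_inequality
    (r : ℝ) (hr : 0 < r) (a : ℂ) (α : ℝ) (hα : ∀ j : ℤ, α ≠ (j : ℝ)) (u : ℂ → ℂ)
    (hu : ContDiff ℝ (⊤ : ℕ∞) u) (hcs : HasCompactSupport u)
    (hsupp : tsupport u ⊆ Metric.ball a r \ {a}) :
    ∫ x in Metric.ball a r, ‖u x‖ ^ 2 ≤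
      (r ^ 2 / (⨅ j : ℤ, |(j : ℝ) - α|) ^ 2) *
        ∫ x in Metric.ball a r,
          (‖Complex.I * fderiv ℝ u x 1 +
              ((α * (-(x - a).im / ‖x - a‖ ^ 2) : ℝ) : ℂ) * u x‖ ^ 2 +
           ‖Complex.I * fderiv ℝ u x Complex.I +
              ((α * ((x - a).re / ‖x - a‖ ^ 2) : ℝ) : ℂ) * u x‖ ^ 2) :=
  poincare_type_inequality_general r hr a α hα u hu hsupp
end

section
/- Let λ ∈ ℝ and let ψ : ℂ → ℂ be twice continuously differentiable on B(0,1) \ {0}, odd (ψ(−y) = −ψ(y) for all y ∈ B(0,1) \ {0}), and satisfy −Δψ(y) = 4λ·‖y‖²·ψ(y) for all y ∈ B(0,1) \ {0}. Suppose φ : B(0,1) \ {0} → ℂ satisfies φ(y²) = (y/‖y‖)·ψ(y) for every y ∈ B(0,1) \ {0} (such a φ exists by oddness of ψ). Then φ is twice continuously differentiable on B(0,1) \ {0} and solves −Δφ(x) + 2i·Dφ(x)[A₀(x)] + ‖A₀(x)‖²·φ(x) = λ·φ(x) for all x ∈ B(0,1) \ {0}; moreover, if ψ is real-valued then φ satisfies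 the K₀-reality condition (x/‖x‖)·conj(φ(x)) = φ(x) on B(0,1) \ {0}. -/
/-
Near a point `x ≠ 0` pick a holomorphic branch `s` of `√x`; then `φ = g ∘ s` with
`g y = (y / ‖y‖) ψ y`. The Laplacian is conformally covariant, `Δ (g ∘ s) = ‖s'‖² (Δ g) ∘ s`, and
`‖s'(x)‖² = 1 / (4‖x‖)`. In `Δ g`, the factor `y / ‖y‖` contributes `-g / ‖y‖²` and a cross term
`2i (y / ‖y‖) ∂_θ ψ / ‖y‖²` (it is constant along rays and rotates with `y`); after the rescaling
these are exactly cancelled by `2i ∂_{A₀} φ + ‖A₀‖² φ`, leaving `λ φ`.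
-/

open Complex

/-- The pointwise Euclidean Laplacian on `ℝ² ≅ ℂ` of a complex-valued function,
as the sum of the second directional derivatives in the directions `1` and `I`. -/
noncomputable def lapC (f : ℂ → ℂ) (x : ℂ) : ℂ :=
  fderiv ℝ (fun y => fderiv ℝ f y 1) x 1 +
    fderiv ℝ (fun y => fderiv ℝ f y Complex.I) x Complex.I

/-- The Aharonov–Bohm potential with pole `0` and circulation `1/2`:
`A₀(x) = (1/2)·(−x₂, x₁)/‖x‖²`, written in complex notation as `(I·x)/(2‖x‖²)`. -/
noncomputable def A0 (x : ℂ) : ℂ := (Complex.I * x) / (2 * (‖x‖ : ℂ) ^ 2)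

open Filter Topology
open scoped RealInnerProductSpace

section UnitVector

variable {E : Type*} [NormedAddCommGroup E] [InnerProductSpace ℝ E] {y : E}

theorem hasFDerivAt_norm_of_ne_zero (hy : y ≠ 0) :
    HasFDerivAt (fun z : E => ‖z‖) (‖y‖⁻¹ • innerSL ℝ y) y := by
  have h := (hasStrictFDerivAt_norm_sq y).hasFDerivAt.sqrt (by simpa using hy)
  simp only [Real.sqrt_sq (norm_nonneg _)] at h
  convert h using 1
  ext v
  simp only [smul_apply, coe_innerSL_apply, smul_eq_mul, one_div, mul_inv_rev, nsmul_eq_mul,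
    Nat.cast_ofNat]
  field_simp

theorem hasFDerivAt_inv_norm_pow (hy : y ≠ 0) (k : ℕ) :
    HasFDerivAt (fun z : E => ‖z‖⁻¹ ^ k) ((-(k * ‖y‖⁻¹ ^ (k + 2))) • innerSL ℝ y) y := by
  have hr : ‖y‖ ≠ 0 := norm_ne_zero_iff.mpr hy
  refine ((hasDerivAt_inv hr).comp_hasFDerivAt y (hasFDerivAt_norm_of_ne_zero hy)).pow k
    |>.congr_fderiv ?_
  ext v
  rcases k with _ | k
  · simp
  · simp only [Function.comp_apply, add_tsub_cancel_right, inv_pow, nsmul_eq_mul, Nat.cast_add,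
      Nat.cast_one, neg_smul, smul_neg, neg_apply, smul_apply, coe_innerSL_apply, smul_eq_mul,
      neg_inj]
    field_simp
    ring

theorem hasFDerivAt_inv_norm_smul_self (hy : y ≠ 0) :
    HasFDerivAt (fun z : E => ‖z‖⁻¹ • z)
      (‖y‖⁻¹ • ContinuousLinearMap.id ℝ E - (‖y‖⁻¹ ^ 3 • innerSL ℝ y).smulRight y) y := by
  have h := (hasFDerivAt_inv_norm_pow hy 1).smul (hasFDerivAt_id y)
  simp only [pow_one] at h
  refine h.congr_fderiv ?_
  ext v
  simp [sub_eq_add_neg]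

theorem fderiv_inv_norm_smul_self_apply (hy : y ≠ 0) (v : E) :
    fderiv ℝ (fun z : E => ‖z‖⁻¹ • z) y v = ‖y‖⁻¹ • v - (‖y‖⁻¹ ^ 3 * ⟪y, v⟫) • y := by
  simp [(hasFDerivAt_inv_norm_smul_self hy).fderiv, mul_smul]

theorem fderiv_inv_norm_smul_self_apply_self (hy : y ≠ 0) :
    fderiv ℝ (fun z : E => ‖z‖⁻¹ • z) y y = 0 := by
  rw [fderiv_inv_norm_smul_self_apply hy, real_inner_self_eq_norm_sq, ← sub_smul]
  field_simp
  simp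

theorem fderiv_inv_norm_smul_self_apply_of_inner_eq_zero (hy : y ≠ 0) {v : E}
    (hv : ⟪y, v⟫ = 0) : fderiv ℝ (fun z : E => ‖z‖⁻¹ • z) y v = ‖y‖⁻¹ • v := by
  simp [fderiv_inv_norm_smul_self_apply hy, hv]

theorem fderiv_fderiv_inv_norm_smul_self_apply (hy : y ≠ 0) (e : E) :
    fderiv ℝ (fun z => fderiv ℝ (fun z : E => ‖z‖⁻¹ • z) z e) y e =
      (3 * ‖y‖⁻¹ ^ 5 * ⟪y, e⟫ ^ 2 - ‖y‖⁻¹ ^ 3 * ‖e‖ ^ 2) • y - (2 * ‖y‖⁻¹ ^ 3 * ⟪y, e⟫) • e := by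
  have hev : (fun z => fderiv ℝ (fun z : E => ‖z‖⁻¹ • z) z e) =ᶠ[𝓝 y]
      fun z => ‖z‖⁻¹ • e - (‖z‖⁻¹ ^ 3 * ⟪z, e⟫) • z := by
    filter_upwards [eventually_ne_nhds hy] with z hz
    exact fderiv_inv_norm_smul_self_apply hz e
  have hinv := (hasFDerivAt_inv_norm_pow hy 1).smul_const e
  have hproj := ((hasFDerivAt_inv_norm_pow hy 3).mul
    ((hasFDerivAt_id y).inner ℝ (hasFDerivAt_const e y))).smul (hasFDerivAt_id y)
  simp only [pow_one] at hinv
  have h : HasFDerivAt (fun z => ‖z‖⁻¹ • e - (‖z‖⁻¹ ^ 3 * ⟪z, e⟫) • z) _ y := hinv.sub hproj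
  rw [hev.fderiv_eq, h.fderiv]
  simp only [Nat.cast_one, Nat.reduceAdd, inv_pow, one_mul, neg_smul, id_eq, Pi.mul_apply,
    Nat.cast_ofNat, smul_neg, sub_apply, ContinuousLinearMap.smulRight_apply, neg_apply, smul_apply,
    coe_innerSL_apply, smul_eq_mul, add_apply, ContinuousLinearMap.id_apply,
    ContinuousLinearMap.comp_apply, ContinuousLinearMap.prod_apply, zero_apply,
    fderivInnerCLM_apply, inner_zero_right, inner_self_eq_norm_sq_to_K, Real.ringHom_apply, zero_add]
  module

end UnitVector

theorem Filter.EventuallyEq.lapC_eq {f g : ℂ → ℂ} {x : ℂ} (h : f =ᶠ[𝓝 x] g) :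
    lapC f x = lapC g x := by
  have hd := h.fderiv (𝕜 := ℝ)
  have (v : ℂ) : (fun y => fderiv ℝ f y v) =ᶠ[𝓝 x] fun y => fderiv ℝ g y v :=
    hd.mono fun y hy => by simp only [hy]
  rw [lapC, lapC, (this 1).fderiv_eq, (this I).fderiv_eq]

section SecondDerivative

variable {E F : Type*} [NormedAddCommGroup E] [NormedSpace ℝ E]
  [NormedAddCommGroup F] [NormedSpace ℝ F] {f : E → F} {x : E}

theorem fderiv_fderiv_apply_eq (hf : DifferentiableAt ℝ (fderiv ℝ f) x) (v w : E) :
    fderiv ℝ (fun y => fderiv ℝ f y v) x w = fderiv ℝ (fderiv ℝ f) x w v := by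
  rw [fderiv_clm_apply hf (differentiableAt_const v)]
  simp

theorem ContDiffAt.differentiableAt_fderiv (hf : ContDiffAt ℝ 2 f x) :
    DifferentiableAt ℝ (fderiv ℝ f) x :=
  (hf.fderiv_right (m := 1) le_rfl).differentiableAt one_ne_zero

end SecondDerivative

theorem lapC_eq_fderiv_fderiv {f : ℂ → ℂ} {x : ℂ} (hf : DifferentiableAt ℝ (fderiv ℝ f) x) :
    lapC f x = fderiv ℝ (fderiv ℝ f) x 1 1 + fderiv ℝ (fderiv ℝ f) x I I := by
  rw [lapC, fderiv_fderiv_apply_eq hf, fderiv_fderiv_apply_eq hf]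

theorem bilin_apply_add_apply_mul_I (B : ℂ →L[ℝ] ℂ →L[ℝ] ℂ) (c : ℂ) :
    B c c + B (c * I) (c * I) = ((‖c‖ ^ 2 : ℝ) : ℂ) * (B 1 1 + B I I) := by
  obtain ⟨p, q, rfl⟩ : ∃ p q : ℝ, c = p • (1 : ℂ) + q • I :=
    ⟨c.re, c.im, by apply Complex.ext <;> simp⟩
  have hI : (p • (1 : ℂ) + q • I) * I = (-q) • (1 : ℂ) + p • I := by
    apply Complex.ext <;> simp
  have hn : ‖p • (1 : ℂ) + q • I‖ ^ 2 = p ^ 2 + q ^ 2 := by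
    rw [Complex.sq_norm, Complex.real_smul, Complex.real_smul, mul_one,
      Complex.normSq_add_mul_I]
  rw [hI, hn]
  simp only [map_add, map_smul, add_apply, smul_apply]
  simp only [Complex.real_smul]
  push_cast
  ring

section ProductRule

variable {E 𝔸 : Type*} [NormedAddCommGroup E] [NormedSpace ℝ E] [NormedCommRing 𝔸]
  [NormedAlgebra ℝ 𝔸] {f g : E → 𝔸} {x : E}

theorem fderiv_fderiv_mul_apply (hf : ContDiffAt ℝ 2 f x) (hg : ContDiffAt ℝ 2 g x) (e : E) :
    fderiv ℝ (fun y => fderiv ℝ (fun z => f z * g z) y e) x e =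
      fderiv ℝ (fun y => fderiv ℝ f y e) x e * g x + 2 * (fderiv ℝ f x e * fderiv ℝ g x e)
        + f x * fderiv ℝ (fun y => fderiv ℝ g y e) x e := by
  have hev : (fun y => fderiv ℝ (fun z => f z * g z) y e) =ᶠ[𝓝 x]
      fun y => f y * fderiv ℝ g y e + fderiv ℝ f y e * g y := by
    filter_upwards [hf.eventually (by simp), hg.eventually (by simp)] with y hfy hgy
    rw [fderiv_fun_mul (hfy.differentiableAt two_ne_zero) (hgy.differentiableAt two_ne_zero)]
    simp only [add_apply, smul_apply, smul_eq_mul, mul_comm]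
  have hfd := hf.differentiableAt two_ne_zero
  have hgd := hg.differentiableAt two_ne_zero
  have hfe : DifferentiableAt ℝ (fun y => fderiv ℝ f y e) x :=
    hf.differentiableAt_fderiv.clm_apply (differentiableAt_const e)
  have hge : DifferentiableAt ℝ (fun y => fderiv ℝ g y e) x :=
    hg.differentiableAt_fderiv.clm_apply (differentiableAt_const e)
  rw [hev.fderiv_eq, fderiv_fun_add (hfd.fun_mul hge) (hfe.fun_mul hgd), fderiv_fun_mul hfd hge,
    fderiv_fun_mul hfe hgd]
  simp only [add_apply, smul_apply, smul_eq_mul]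
  ring

end ProductRule

theorem lapC_mul {f g : ℂ → ℂ} {x : ℂ} (hf : ContDiffAt ℝ 2 f x) (hg : ContDiffAt ℝ 2 g x) :
    lapC (fun y => f y * g y) x = lapC f x * g x
      + 2 * (fderiv ℝ f x 1 * fderiv ℝ g x 1 + fderiv ℝ f x I * fderiv ℝ g x I)
      + f x * lapC g x := by
  simp only [lapC, fderiv_fderiv_mul_apply hf hg]
  ring

section Conformal

variable {F : Type*} [NormedAddCommGroup F] [NormedSpace ℝ F] {f : ℂ → F} {s : ℂ → ℂ} {x : ℂ}

theorem hasFDerivAt_restrictScalars_of_hasDerivAt {c : ℂ} (hs : HasDerivAt s c x) :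
    HasFDerivAt s (c • ContinuousLinearMap.id ℝ ℂ) x := by
  refine (hs.hasFDerivAt.restrictScalars ℝ).congr_fderiv ?_
  ext v
  simp [mul_comm]

theorem fderiv_comp_apply_of_differentiableAt_complex (hs : DifferentiableAt ℂ s x)
    (hf : DifferentiableAt ℝ f (s x)) (v : ℂ) :
    fderiv ℝ (f ∘ s) x v = fderiv ℝ f (s x) (deriv s x * v) := by
  rw [(hf.hasFDerivAt.comp x (hasFDerivAt_restrictScalars_of_hasDerivAt hs.hasDerivAt)).fderiv]
  simp

theorem fderiv_fderiv_comp_apply_of_analyticAt (hs : AnalyticAt ℂ s x)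
    (hf : ContDiffAt ℝ 2 f (s x)) (e : ℂ) :
    fderiv ℝ (fun y => fderiv ℝ (f ∘ s) y e) x e =
      fderiv ℝ (fderiv ℝ f) (s x) (deriv s x * e) (deriv s x * e)
        + fderiv ℝ f (s x) (deriv (deriv s) x * e * e) := by
  have hev : (fun y => fderiv ℝ (f ∘ s) y e) =ᶠ[𝓝 x]
      fun y => fderiv ℝ f (s y) (deriv s y * e) := by
    filter_upwards [hs.eventually_analyticAt, hs.continuousAt.eventually (hf.eventually (by simp))]
      with y hsy hfy
    exact fderiv_comp_apply_of_differentiableAt_complex hsy.differentiableAt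
      (hfy.differentiableAt two_ne_zero) e
  have hDf : HasFDerivAt (fun y => fderiv ℝ f (s y))
      ((fderiv ℝ (fderiv ℝ f) (s x)).comp (deriv s x • ContinuousLinearMap.id ℝ ℂ)) x :=
    hf.differentiableAt_fderiv.hasFDerivAt.comp x
      (hasFDerivAt_restrictScalars_of_hasDerivAt hs.differentiableAt.hasDerivAt)
  have hds : HasFDerivAt (fun y => deriv s y * e)
      ((deriv (deriv s) x * e) • ContinuousLinearMap.id ℝ ℂ) x :=
    hasFDerivAt_restrictScalars_of_hasDerivAt (hs.deriv.differentiableAt.hasDerivAt.mul_const e)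
  rw [hev.fderiv_eq, (hDf.clm_apply hds).fderiv]
  simp [add_comm]

end Conformal

theorem lapC_comp_of_analyticAt {f s : ℂ → ℂ} {x : ℂ} (hs : AnalyticAt ℂ s x)
    (hf : ContDiffAt ℝ 2 f (s x)) :
    lapC (f ∘ s) x = ((‖deriv s x‖ ^ 2 : ℝ) : ℂ) * lapC f (s x) := by
  have hcancel : deriv (deriv s) x * I * I = -(deriv (deriv s) x * 1 * 1) := by
    rw [mul_assoc, I_mul_I]; ring
  rw [lapC, fderiv_fderiv_comp_apply_of_analyticAt hs hf,
    fderiv_fderiv_comp_apply_of_analyticAt hs hf, hcancel, map_neg, mul_one,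
    lapC_eq_fderiv_fderiv hf.differentiableAt_fderiv, ← bilin_apply_add_apply_mul_I]
  abel

section UnitComplex

variable {y : ℂ}

theorem div_ofReal_norm_eq_inv_norm_smul : (fun z : ℂ => z / (‖z‖ : ℂ)) = fun z => ‖z‖⁻¹ • z := by
  funext z
  rw [Complex.real_smul, ofReal_inv, div_eq_inv_mul]

theorem lapC_div_norm (hy : y ≠ 0) :
    lapC (fun z : ℂ => z / (‖z‖ : ℂ)) y = -(y / ‖y‖) / ‖y‖ ^ 2 := by
  have hr : (‖y‖ : ℂ) ≠ 0 := by simpa using hy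
  have hre : (y.re : ℂ) + y.im * I = y := re_add_im y
  have hn : (y.re : ℂ) ^ 2 + (y.im : ℂ) ^ 2 = (‖y‖ : ℂ) ^ 2 := by
    norm_cast
    rw [Complex.sq_norm, normSq_apply]
    ring
  rw [div_ofReal_norm_eq_inv_norm_smul, lapC, fderiv_fderiv_inv_norm_smul_self_apply hy,
    fderiv_fderiv_inv_norm_smul_self_apply hy]
  simp only [inv_pow, Complex.inner, one_mul, conj_re, norm_one, one_pow, mul_one, real_smul,
    ofReal_sub, ofReal_mul, ofReal_ofNat, ofReal_inv, ofReal_pow, mul_re, I_re, zero_mul, I_im,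
    conj_im, mul_neg, sub_neg_eq_add, zero_add, norm_I]
  field_simp
  linear_combination 3 * y * hn - 2 * (‖y‖ : ℂ) ^ 2 * hre

theorem contDiffAt_div_norm (hy : y ≠ 0) : ContDiffAt ℝ 2 (fun z : ℂ => z / (‖z‖ : ℂ)) y := by
  rw [div_ofReal_norm_eq_inv_norm_smul]
  exact ((contDiffAt_norm ℝ hy).inv (norm_ne_zero_iff.mpr hy)).smul contDiffAt_id

theorem fderiv_div_norm_apply_self (hy : y ≠ 0) :
    fderiv ℝ (fun z : ℂ => z / (‖z‖ : ℂ)) y y = 0 := by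
  rw [div_ofReal_norm_eq_inv_norm_smul, fderiv_inv_norm_smul_self_apply_self hy]

theorem fderiv_div_norm_apply_mul_I (hy : y ≠ 0) :
    fderiv ℝ (fun z : ℂ => z / (‖z‖ : ℂ)) y (y * I) = y * I / ‖y‖ := by
  rw [div_ofReal_norm_eq_inv_norm_smul,
    fderiv_inv_norm_smul_self_apply_of_inner_eq_zero hy (by rw [Complex.inner, mul_right_comm, mul_conj]; simp),
    Complex.real_smul, ofReal_inv, div_eq_inv_mul]

variable {ψ : ℂ → ℂ}

theorem fderiv_div_norm_mul_apply_mul_I (hy : y ≠ 0) (hψ : DifferentiableAt ℝ ψ y) :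
    fderiv ℝ (fun z => z / (‖z‖ : ℂ) * ψ z) y (y * I) =
      y / ‖y‖ * (fderiv ℝ ψ y (y * I) + I * ψ y) := by
  rw [fderiv_fun_mul ((contDiffAt_div_norm hy).differentiableAt two_ne_zero) hψ]
  simp only [add_apply, smul_apply, smul_eq_mul, fderiv_div_norm_apply_mul_I hy]
  ring

theorem lapC_div_norm_mul (hy : y ≠ 0) (hψ : ContDiffAt ℝ 2 ψ y) :
    lapC (fun z => z / (‖z‖ : ℂ) * ψ z) y =
      y / ‖y‖ * (lapC ψ y + (2 * I * fderiv ℝ ψ y (y * I) - ψ y) / ‖y‖ ^ 2) := by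
  have hr : (‖y‖ : ℂ) ≠ 0 := by simpa using hy
  have hgrad := bilin_apply_add_apply_mul_I ((ContinuousLinearMap.mul ℝ ℂ).bilinearComp
    (fderiv ℝ (fun z : ℂ => z / (‖z‖ : ℂ)) y) (fderiv ℝ ψ y)) y
  simp only [ContinuousLinearMap.bilinearComp_apply, ContinuousLinearMap.mul_apply'] at hgrad
  rw [fderiv_div_norm_apply_self hy, fderiv_div_norm_apply_mul_I hy] at hgrad
  rw [lapC_mul (contDiffAt_div_norm hy) hψ, lapC_div_norm hy]
  push_cast at hgrad
  field_simp
  field_simp at hgrad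
  linear_combination (-2) * hgrad

end UnitComplex

theorem exists_analyticAt_sq_eq_self {x₀ : ℂ} (hx : x₀ ≠ 0) :
    ∃ s : ℂ → ℂ, AnalyticAt ℂ s x₀ ∧ ∀ x, s x ^ 2 = x := by
  refine ⟨fun x => x₀ ^ (2⁻¹ : ℂ) * (x / x₀) ^ (2⁻¹ : ℂ), ?_, fun x => ?_⟩
  · refine analyticAt_const.mul ((analyticAt_id.div_const).cpow analyticAt_const ?_)
    simp [hx]
  · rw [mul_pow, ← Nat.cast_ofNat, cpow_nat_inv_pow _ two_ne_zero, cpow_nat_inv_pow _ two_ne_zero,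
      mul_div_cancel₀ _ hx]

theorem two_mul_mul_deriv_eq_one {s : ℂ → ℂ} {x : ℂ} (hs : DifferentiableAt ℂ s x)
    (hsq : ∀ x, s x ^ 2 = x) : 2 * s x * deriv s x = 1 := by
  have h := hs.hasDerivAt.pow 2
  rw [show s ^ 2 = id from funext hsq] at h
  simpa using h.unique (hasDerivAt_id x)

/-- `(i∇ + A₀)² φ`; the term `i (div A₀) φ` is absent because `A₀` is divergence free. -/
noncomputable def abOperator (φ : ℂ → ℂ) (x : ℂ) : ℂ :=
  -lapC φ x + 2 * I * fderiv ℝ φ x (A0 x) + ((‖A0 x‖ ^ 2 : ℝ) : ℂ) * φ x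

theorem norm_A0_sq (x : ℂ) : ‖A0 x‖ ^ 2 = (4 * ‖x‖ ^ 2)⁻¹ := by
  rcases eq_or_ne x 0 with rfl | hx
  · simp [A0]
  · have hr : ‖x‖ ≠ 0 := norm_ne_zero_iff.mpr hx
    simp only [A0, Complex.norm_div, Complex.norm_mul, norm_I, one_mul, norm_ofNat, norm_pow,
      norm_real, norm_norm, mul_inv_rev]
    field_simp
    ring

theorem abOperator_eq_of_eventuallyEq_comp_sqrt {φ ψ s : ℂ → ℂ} {x : ℂ} (hs : AnalyticAt ℂ s x)
    (hsq : ∀ z, s z ^ 2 = z) (hψ : ContDiffAt ℝ 2 ψ (s x))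
    (hφ : φ =ᶠ[𝓝 x] (fun y => y / (‖y‖ : ℂ) * ψ y) ∘ s) :
    abOperator φ x = s x / ‖s x‖ * -lapC ψ (s x) / (4 * ‖s x‖ ^ 2) := by
  set y := s x with hyx
  have hc : 2 * y * deriv s x = 1 := two_mul_mul_deriv_eq_one hs.differentiableAt hsq
  have hy : y ≠ 0 := by rintro h; simp [h] at hc
  have hxn : ‖x‖ = ‖y‖ ^ 2 := by rw [← hsq x, norm_pow]
  have hr : (‖y‖ : ℂ) ≠ 0 := by simpa using hy
  have hg := (contDiffAt_div_norm hy).mul hψ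
  have hcn : ‖deriv s x‖ ^ 2 = (4 * ‖y‖ ^ 2)⁻¹ := by
    have h := congrArg (‖·‖ ^ 2) hc
    simp only [norm_mul, Complex.norm_ofNat, norm_one] at h
    field_simp
    linear_combination h
  have hA : A0 x = I * y ^ 2 / (2 * (‖y‖ : ℂ) ^ 4) := by
    rw [A0, hxn, ← hsq x]
    push_cast
    ring
  have hcA : deriv s x * A0 x = ((4 * ‖y‖ ^ 4)⁻¹ : ℝ) • (y * I) := by
    rw [hA, Complex.real_smul]
    push_cast
    field_simp
    linear_combination 2 * hc
  rw [abOperator, hφ.lapC_eq, hφ.fderiv_eq, hφ.eq_of_nhds, Function.comp_apply,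
    lapC_comp_of_analyticAt hs hg,
    fderiv_comp_apply_of_differentiableAt_complex hs.differentiableAt
      (hg.differentiableAt two_ne_zero), hcA, map_smul, norm_A0_sq, hcn,
    fderiv_div_norm_mul_apply_mul_I hy (hψ.differentiableAt two_ne_zero), lapC_div_norm_mul hy hψ,
    hxn]
  simp only [← hyx, Complex.real_smul]
  push_cast
  field_simp
  linear_combination (2 * ψ y) * I_mul_I

theorem exists_analyticAt_sqrt_eventuallyEq_comp {φ g : ℂ → ℂ} {V : Set ℂ} (hV : IsOpen V)
    (hφ : ∀ y, y ^ 2 ∈ V → φ (y ^ 2) = g y) {x : ℂ} (hx : x ∈ V) (hx0 : x ≠ 0) :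
    ∃ s : ℂ → ℂ, AnalyticAt ℂ s x ∧ (∀ z, s z ^ 2 = z) ∧ φ =ᶠ[𝓝 x] g ∘ s := by
  obtain ⟨s, hs, hsq⟩ := exists_analyticAt_sq_eq_self hx0
  refine ⟨s, hs, hsq, ?_⟩
  filter_upwards [hV.mem_nhds hx] with z hz
  rw [Function.comp_apply, ← hφ (s z) (by rwa [hsq]), hsq]

theorem sq_mem_ball_diff_zero_iff {y : ℂ} :
    y ^ 2 ∈ Metric.ball (0 : ℂ) 1 \ {0} ↔ y ∈ Metric.ball (0 : ℂ) 1 \ {0} := by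
  simp [norm_pow, pow_lt_one_iff_of_nonneg]

theorem sq_div_norm_mul_conj_div_norm_mul (y : ℂ) {a : ℂ} (ha : a.im = 0) :
    y ^ 2 / (‖y ^ 2‖ : ℂ) * (starRingEnd ℂ) (y / ‖y‖ * a) = y / ‖y‖ * a := by
  rcases eq_or_ne y 0 with rfl | hy
  · simp
  have hr : (‖y‖ : ℂ) ≠ 0 := by simpa using hy
  rw [map_mul, map_div₀, conj_ofReal, conj_eq_iff_im.mpr ha, norm_pow]
  push_cast
  field_simp
  linear_combination a * mul_conj' y

theorem double_covering_to_eigenfunction_general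
    (lam : ℝ) (ψ : ℂ → ℂ)
    (hreg : ContDiffOn ℝ 2 ψ (Metric.ball (0 : ℂ) 1 \ {0}))
    (heq : ∀ y ∈ Metric.ball (0 : ℂ) 1 \ {0},
      -lapC ψ y = 4 * (lam : ℂ) * ((‖y‖ ^ 2 : ℝ) : ℂ) * ψ y)
    (φ : ℂ → ℂ)
    (hφ : ∀ y ∈ Metric.ball (0 : ℂ) 1 \ {0},
      φ (y ^ 2) = (y / (‖y‖ : ℂ)) * ψ y) :
    ContDiffOn ℝ 2 φ (Metric.ball (0 : ℂ) 1 \ {0}) ∧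
    (∀ x ∈ Metric.ball (0 : ℂ) 1 \ {0},
      -lapC φ x + 2 * Complex.I * fderiv ℝ φ x (A0 x)
        + ((‖A0 x‖ ^ 2 : ℝ) : ℂ) * φ x = (lam : ℂ) * φ x) ∧
    ((∀ y ∈ Metric.ball (0 : ℂ) 1 \ {0}, (ψ y).im = 0) →
      ∀ x ∈ Metric.ball (0 : ℂ) 1 \ {0},
        (x / (‖x‖ : ℂ)) * (starRingEnd ℂ) (φ x) = φ x) := by
  set D := Metric.ball (0 : ℂ) 1 \ {0}
  have hD : IsOpen D := Metric.isOpen_ball.sdiff isClosed_singleton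
  have hlocal : ∀ x ∈ D, ∃ s : ℂ → ℂ, AnalyticAt ℂ s x ∧ (∀ z, s z ^ 2 = z) ∧ s x ∈ D ∧
      φ =ᶠ[𝓝 x] (fun y => y / (‖y‖ : ℂ) * ψ y) ∘ s := by
    intro x hx
    obtain ⟨s, hs, hsq, hφs⟩ := exists_analyticAt_sqrt_eventuallyEq_comp hD
      (fun y hy => hφ y (sq_mem_ball_diff_zero_iff.mp hy)) hx hx.2
    exact ⟨s, hs, hsq, sq_mem_ball_diff_zero_iff.mp (by rwa [hsq]), hφs⟩
  refine ⟨fun x hx => ?_, fun x hx => ?_, fun hreal x hx => ?_⟩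
  · obtain ⟨s, hs, -, hsx, hφs⟩ := hlocal x hx
    have hg := (contDiffAt_div_norm hsx.2).mul (hreg.contDiffAt (hD.mem_nhds hsx))
    exact ((hg.comp x (hs.contDiffAt.restrict_scalars ℝ)).congr_of_eventuallyEq hφs)
      |>.contDiffWithinAt
  · obtain ⟨s, hs, hsq, hsx, hφs⟩ := hlocal x hx
    change abOperator φ x = _
    rw [abOperator_eq_of_eventuallyEq_comp_sqrt hs hsq (hreg.contDiffAt (hD.mem_nhds hsx)) hφs,
      heq _ hsx, hφs.eq_of_nhds, Function.comp_apply]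
    push_cast
    field_simp
  · obtain ⟨s, -, hsq, hsx, -⟩ := hlocal x hx
    rw [← hsq x, hφ _ hsx]
    exact sq_div_norm_mul_conj_div_norm_mul (s x) (hreal _ hsx)

/-- Inverse double-covering correspondence: if `ψ` is `C²`, odd, and satisfies
`−Δψ = 4λ‖y‖²ψ` on the punctured unit disk, and `φ` satisfies
`φ(y²) = (y/‖y‖)·ψ(y)` there, then `φ` is `C²` and solves the Aharonov–Bohm
eigenequation `−Δφ + 2i·Dφ[A₀] + ‖A₀‖²φ = λφ` on the punctured unit disk;
moreover if `ψ` is real valued then `φ` is `K₀`-real. -/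
theorem double_covering_to_eigenfunction
    (lam : ℝ) (ψ : ℂ → ℂ)
    (hreg : ContDiffOn ℝ 2 ψ (Metric.ball (0 : ℂ) 1 \ {0}))
    (hodd : ∀ y ∈ Metric.ball (0 : ℂ) 1 \ {0}, ψ (-y) = -ψ y)
    (heq : ∀ y ∈ Metric.ball (0 : ℂ) 1 \ {0},
      -lapC ψ y = 4 * (lam : ℂ) * ((‖y‖ ^ 2 : ℝ) : ℂ) * ψ y)
    (φ : ℂ → ℂ)
    (hφ : ∀ y ∈ Metric.ball (0 : ℂ) 1 \ {0},
      φ (y ^ 2) = (y / (‖y‖ : ℂ)) * ψ y) :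
    ContDiffOn ℝ 2 φ (Metric.ball (0 : ℂ) 1 \ {0}) ∧
    (∀ x ∈ Metric.ball (0 : ℂ) 1 \ {0},
      -lapC φ x + 2 * Complex.I * fderiv ℝ φ x (A0 x)
        + ((‖A0 x‖ ^ 2 : ℝ) : ℂ) * φ x = (lam : ℂ) * φ x) ∧
    ((∀ y ∈ Metric.ball (0 : ℂ) 1 \ {0}, (ψ y).im = 0) →
      ∀ x ∈ Metric.ball (0 : ℂ) 1 \ {0},
        (x / (‖x‖ : ℂ)) * (starRingEnd ℂ) (φ x) = φ x) :=
  double_covering_to_eigenfunction_general lam ψ hreg heq φ hφ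
end

section
/- Let U ⊆ ℂ \ {0} be open and invariant under complex conjugation, and let u : ℂ → ℂ be twice continuously differentiable on U. Define the pointwise Aharonov–Bohm operator L u = −Δu + 2i·Du[A₀] + ‖A₀‖²·u and the antilinear operator (Σu)(x) = conj(u(conj(x))). Then Σu is twice continuously differentiable on U and L(Σu)(x) = conj((L u)(conj(x))) = (Σ(L u))(x) for every x ∈ U; i.e., L and Σ commute on U. -/
open Complex

/-- The pointwise Aharonov–Bohm operator `L u = −Δu + 2i·Du[A₀] + ‖A₀‖²·u`. -/
noncomputable def abOp0 (u : ℂ → ℂ) (x : ℂ) : ℂ :=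
  -lapC u x + 2 * Complex.I * fderiv ℝ u x (A0 x) + ((‖A0 x‖ ^ 2 : ℝ) : ℂ) * u x

/-- The antilinear reflection operator `(Σu)(x) = conj(u(conj x))`. -/
noncomputable def SigmaOp (u : ℂ → ℂ) (x : ℂ) : ℂ :=
  (starRingEnd ℂ) (u ((starRingEnd ℂ) x))

/-!
Conjugation is a real-linear isometry, so by the chain rule `D(Σu)(x) v = conj (Du(conj x) (conj v))`.
Applying this twice, the second derivatives of `Σu` in the directions `1` and `I` are the conjugates
of those of `u` at `conj x` (the two sign changes from `conj I = -I` cancel), so `Δ(Σu) = Σ(Δu)`.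
The potential is odd under the reflection, `conj (A₀ x) = -A₀ (conj x)`, and this sign is cancelled
by `conj (2i) = -2i` in the magnetic term, while `‖A₀‖²` is reflection invariant.
-/

theorem ContDiffOn.SigmaOp {n : WithTop ℕ∞} {u : ℂ → ℂ} {U : Set ℂ}
    (hu : ContDiffOn ℝ n u U) (hUconj : ∀ x ∈ U, (starRingEnd ℂ) x ∈ U) :
    ContDiffOn ℝ n (SigmaOp u) U :=
  conjCLE.contDiff.comp_contDiffOn (hu.comp conjCLE.contDiff.contDiffOn hUconj)

theorem hasFDerivAt_SigmaOp {u : ℂ → ℂ} {f : ℂ →L[ℝ] ℂ} {x : ℂ}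
    (h : HasFDerivAt u f ((starRingEnd ℂ) x)) :
    HasFDerivAt (SigmaOp u) (((conjCLE : ℂ →L[ℝ] ℂ).comp f).comp (conjCLE : ℂ →L[ℝ] ℂ)) x :=
  conjCLE.hasFDerivAt.comp x (h.comp x conjCLE.hasFDerivAt)

theorem fderiv_SigmaOp_apply {u : ℂ → ℂ} {x : ℂ}
    (hu : DifferentiableAt ℝ u ((starRingEnd ℂ) x)) (v : ℂ) :
    fderiv ℝ (SigmaOp u) x v
      = (starRingEnd ℂ) (fderiv ℝ u ((starRingEnd ℂ) x) ((starRingEnd ℂ) v)) := by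
  rw [(hasFDerivAt_SigmaOp hu.hasFDerivAt).fderiv]
  rfl

theorem fderiv_SigmaOp_apply_eventuallyEq {u : ℂ → ℂ} {x : ℂ}
    (hu : ∀ᶠ z in nhds ((starRingEnd ℂ) x), DifferentiableAt ℝ u z) (v : ℂ) :
    (fun y => fderiv ℝ (SigmaOp u) y v)
      =ᶠ[nhds x] SigmaOp (fun z => fderiv ℝ u z ((starRingEnd ℂ) v)) := by
  filter_upwards [(Complex.continuous_conj.tendsto x).eventually hu] with y hy
  exact fderiv_SigmaOp_apply hy v

theorem fderiv_fderiv_SigmaOp_apply {u : ℂ → ℂ} {x : ℂ}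
    (hu : ContDiffAt ℝ 2 u ((starRingEnd ℂ) x)) (v w : ℂ) :
    fderiv ℝ (fun y => fderiv ℝ (SigmaOp u) y v) x w
      = (starRingEnd ℂ) (fderiv ℝ (fun z => fderiv ℝ u z ((starRingEnd ℂ) v))
          ((starRingEnd ℂ) x) ((starRingEnd ℂ) w)) := by
  have hdiff : ∀ᶠ z in nhds ((starRingEnd ℂ) x), DifferentiableAt ℝ u z :=
    (hu.eventually (by simp)).mono fun z hz => hz.differentiableAt (by norm_num)
  have hdiff' : DifferentiableAt ℝ (fun z => fderiv ℝ u z ((starRingEnd ℂ) v))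
      ((starRingEnd ℂ) x) :=
    ((hu.fderiv_right (m := 1) (by norm_num)).differentiableAt (by norm_num)).clm_apply
      (differentiableAt_const _)
  rw [(fderiv_SigmaOp_apply_eventuallyEq hdiff v).fderiv_eq, fderiv_SigmaOp_apply hdiff' w]

theorem lapC_SigmaOp {u : ℂ → ℂ} {x : ℂ} (hu : ContDiffAt ℝ 2 u ((starRingEnd ℂ) x)) :
    lapC (SigmaOp u) x = (starRingEnd ℂ) (lapC u ((starRingEnd ℂ) x)) := by
  have hneg : (fun z => fderiv ℝ u z (-I)) = fun z => -fderiv ℝ u z I := by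
    funext z
    exact map_neg _ I
  rw [lapC, lapC, fderiv_fderiv_SigmaOp_apply hu, fderiv_fderiv_SigmaOp_apply hu, map_add,
    conj_I, hneg, fderiv_fun_neg]
  simp

theorem conj_A0 (x : ℂ) : (starRingEnd ℂ) (A0 x) = -A0 ((starRingEnd ℂ) x) := by
  simp only [A0, map_div₀, map_mul, map_pow, map_ofNat, conj_I, conj_ofReal,
    Complex.norm_conj]
  ring

theorem norm_A0_conj (x : ℂ) : ‖A0 ((starRingEnd ℂ) x)‖ = ‖A0 x‖ := by
  rw [← norm_neg, ← conj_A0, Complex.norm_conj]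

theorem fderiv_SigmaOp_A0 {u : ℂ → ℂ} {x : ℂ}
    (hu : DifferentiableAt ℝ u ((starRingEnd ℂ) x)) :
    fderiv ℝ (SigmaOp u) x (A0 x)
      = -(starRingEnd ℂ) (fderiv ℝ u ((starRingEnd ℂ) x) (A0 ((starRingEnd ℂ) x))) := by
  rw [fderiv_SigmaOp_apply hu, conj_A0, map_neg, map_neg]

theorem abOp0_SigmaOp {u : ℂ → ℂ} {x : ℂ} (hu : ContDiffAt ℝ 2 u ((starRingEnd ℂ) x)) :
    abOp0 (SigmaOp u) x = SigmaOp (abOp0 u) x := by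
  rw [SigmaOp, abOp0, abOp0, lapC_SigmaOp hu,
    fderiv_SigmaOp_A0 (hu.differentiableAt (by norm_num)), norm_A0_conj]
  simp only [SigmaOp, map_add, map_neg, map_mul, conj_I, conj_ofReal, map_ofNat]
  ring

theorem abOp_commutes_with_Sigma_general
    (U : Set ℂ) (hU : IsOpen U)
    (hUconj : ∀ x ∈ U, (starRingEnd ℂ) x ∈ U)
    (u : ℂ → ℂ) (hu : ContDiffOn ℝ 2 u U) :
    ContDiffOn ℝ 2 (SigmaOp u) U ∧
    ∀ x ∈ U, abOp0 (SigmaOp u) x = (starRingEnd ℂ) (abOp0 u ((starRingEnd ℂ) x)) ∧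
      abOp0 (SigmaOp u) x = SigmaOp (abOp0 u) x := by
  refine ⟨hu.SigmaOp hUconj, fun x hx => ?_⟩
  have hcomm := abOp0_SigmaOp (hu.contDiffAt (hU.mem_nhds (hUconj x hx)))
  exact ⟨hcomm, hcomm⟩

/-- The Aharonov–Bohm operator `L` commutes with the reflection `Σ`: if `U ⊆ ℂ \ {0}`
is open and conjugation-invariant and `u` is `C²` on `U`, then `Σu` is `C²` on `U` and
`L(Σu)(x) = conj((L u)(conj x)) = (Σ(L u))(x)` on `U`. -/
theorem abOp_commutes_with_Sigma
    (U : Set ℂ) (hU : IsOpen U) (hU0 : (0 : ℂ) ∉ U)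
    (hUconj : ∀ x ∈ U, (starRingEnd ℂ) x ∈ U)
    (u : ℂ → ℂ) (hu : ContDiffOn ℝ 2 u U) :
    ContDiffOn ℝ 2 (SigmaOp u) U ∧
    ∀ x ∈ U, abOp0 (SigmaOp u) x = (starRingEnd ℂ) (abOp0 u ((starRingEnd ℂ) x)) ∧
      abOp0 (SigmaOp u) x = SigmaOp (abOp0 u) x :=
  abOp_commutes_with_Sigma_general U hU hUconj u hu
end

section
/- For every integer k ≥ 1, there exists exactly one x ∈ (kπ, (k+1)π) such that sin(x) − x·cos(x) = 0; moreover sin(x) − x·cos(x) ≠ 0 for all x ∈ (0, π]. -/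
/-!
On `[kπ, (k+1)π]` the function `f x = sin x - x cos x` has derivative `x sin x`, whose sign
there is `(-1)^k`; so `(-1)^k f` is strictly increasing on that interval. It runs from
`-kπ` to `(k+1)π`, since `f (nπ) = -nπ (-1)^n`, and therefore vanishes exactly once inside
when `k ≥ 1`; for `k = 0` it starts at `f 0 = 0` and is positive on `(0, π]`.
-/

open Real Set

theorem existsUnique_mem_Ioo_eq_zero_of_strictMonoOn {f : ℝ → ℝ} {a b : ℝ} (hab : a ≤ b)
    (hf : ContinuousOn f (Icc a b)) (hmono : StrictMonoOn f (Icc a b))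
    (ha : f a < 0) (hb : 0 < f b) : ∃! x, x ∈ Ioo a b ∧ f x = 0 := by
  obtain ⟨x, hx, hfx⟩ := intermediate_value_Ioo hab hf ⟨ha, hb⟩
  refine ⟨x, ⟨hx, hfx⟩, fun y ⟨hy, hfy⟩ => ?_⟩
  exact hmono.injOn (Ioo_subset_Icc_self hy) (Ioo_subset_Icc_self hx) (hfy.trans hfx.symm)

theorem hasDerivAt_sin_sub_mul_cos (x : ℝ) :
    HasDerivAt (fun y => sin y - y * cos y) (x * sin x) x := by
  have h := (hasDerivAt_sin x).sub ((hasDerivAt_id x).mul (hasDerivAt_cos x))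
  exact h.congr_deriv (by simp only [id]; ring)

theorem neg_one_pow_mul_sin_pos {k : ℕ} {x : ℝ} (hx : x ∈ Ioo (k * π) ((k + 1) * π)) :
    0 < (-1) ^ k * sin x := by
  rw [← sin_sub_nat_mul_pi]
  exact sin_pos_of_pos_of_lt_pi (by linarith [hx.1]) (by linarith [hx.2])

theorem strictMonoOn_neg_one_pow_mul_sin_sub_mul_cos (k : ℕ) :
    StrictMonoOn (fun x => (-1) ^ k * (sin x - x * cos x)) (Icc (k * π) ((k + 1) * π)) := by
  refine strictMonoOn_of_deriv_pos (convex_Icc _ _) (by fun_prop) fun x hx => ?_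
  rw [interior_Icc] at hx
  rw [((hasDerivAt_sin_sub_mul_cos x).const_mul _).deriv, mul_left_comm]
  have hx₀ : 0 < x := lt_of_le_of_lt (by positivity) hx.1
  exact mul_pos hx₀ (neg_one_pow_mul_sin_pos hx)

theorem neg_one_pow_mul_sin_sub_mul_cos_nat_mul_pi (n : ℕ) :
    (-1) ^ n * (sin (n * π) - n * π * cos (n * π)) = -(n * π) := by
  rw [sin_nat_mul_pi, cos_nat_mul_pi]
  have : ((-1 : ℝ) ^ n) ^ 2 = 1 := by rw [← pow_mul, mul_comm, pow_mul, neg_one_sq, one_pow]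
  linear_combination (-(n * π)) * this

/-- Interlacing of the zeros of `J_{1/2}` and `J_{3/2}`: for every integer `k ≥ 1`
there is exactly one `x ∈ (kπ, (k+1)π)` with `sin x − x·cos x = 0`, and
`sin x − x·cos x ≠ 0` for all `x ∈ (0, π]`. -/
theorem bessel_zero_interlacing :
    (∀ k : ℕ, 1 ≤ k → ∃! x : ℝ,
      x ∈ Set.Ioo ((k : ℝ) * Real.pi) (((k : ℝ) + 1) * Real.pi) ∧
        Real.sin x - x * Real.cos x = 0) ∧
    (∀ x ∈ Set.Ioc (0 : ℝ) Real.pi, Real.sin x - x * Real.cos x ≠ 0) := by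
  constructor
  · intro k hk
    have hkπ : 0 < (k : ℝ) * π := by positivity
    have h_left := neg_one_pow_mul_sin_sub_mul_cos_nat_mul_pi k
    have h_right := neg_one_pow_mul_sin_sub_mul_cos_nat_mul_pi (k + 1)
    push_cast [pow_succ, mul_neg_one, neg_mul, neg_inj] at h_right
    have h := existsUnique_mem_Ioo_eq_zero_of_strictMonoOn (by gcongr; linarith) (by fun_prop)
      (strictMonoOn_neg_one_pow_mul_sin_sub_mul_cos k) (by linarith) (by rw [h_right]; positivity)
    simpa using h
  · intro x hx
    have h := strictMonoOn_neg_one_pow_mul_sin_sub_mul_cos 0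
    simp only [pow_zero, one_mul, CharP.cast_eq_zero, zero_mul, zero_add] at h
    have hpos := h (left_mem_Icc.mpr pi_pos.le) (Ioc_subset_Icc_self hx) hx.1
    simp only [sin_zero, cos_zero, zero_mul, sub_zero] at hpos
    exact hpos.ne'
end
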